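/- Let P_n be the path on n ≥ 1 vertices. Then deg h_{P_n} = α(P_n) if and only if n ≡ 0 or 2 (mod 3), and deg h_{P_n} = α(P_n) − 1 if and only if n ≡ 1 (mod 3). (Here α(P_n) = ⌈n/2⌉.) -/

import Mathlib

open Finset Polynomial

/-- Every subset of a finite type gets a `Fintype` instance (classically). -/
noncomputable instance fintypeOfSet {V : Type*} [Finite V] (s : Set V) : Fintype ↥s :=
  Fintype.ofFinite _

/-- `s` is an independent set of the graph `G`: no two of its vertices are adjacent. -/
def IsIndepSet {V : Type*} (G : SimpleGraph V) (s : Finset V) : Prop :=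
  ∀ u ∈ s, ∀ v ∈ s, ¬ G.Adj u v

/-- The finset of all independent sets of `G`. -/
noncomputable def indepFinsets {V : Type*} [Fintype V] (G : SimpleGraph V) :
    Finset (Finset V) :=
  @Finset.filter _ (fun s => IsIndepSet G s) (Classical.decPred _) Finset.univ

/-- `sCount G i` is the number of independent sets of size `i` in `G`. -/
noncomputable def sCount {V : Type*} [Fintype V] (G : SimpleGraph V) (i : ℕ) : ℕ :=
  ((indepFinsets G).filter (fun s => s.card = i)).card

/-- The independence number `α(G)`: the maximum size of an independent set. -/
noncomputable def indepNum {V : Type*} [Fintype V] (G : SimpleGraph V) : ℕ :=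
  (indepFinsets G).sup Finset.card

/-- The independence polynomial `I(G,t) = Σ_i s_i(G) t^i ∈ ℤ[t]`. -/
noncomputable def indepPoly {V : Type*} [Fintype V] (G : SimpleGraph V) : Polynomial ℤ :=
  ∑ i ∈ Finset.range (indepNum G + 1), Polynomial.C (sCount G i : ℤ) * Polynomial.X ^ i

/-- The h-polynomial of the edge ideal of `G`:
`h_G(t) = Σ_i s_i(G) t^i (1-t)^{α(G)-i} ∈ ℤ[t]`. -/
noncomputable def hPoly {V : Type*} [Fintype V] (G : SimpleGraph V) : Polynomial ℤ :=
  ∑ i ∈ Finset.range (indepNum G + 1),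
    Polynomial.C (sCount G i : ℤ) * Polynomial.X ^ i *
      (1 - Polynomial.X) ^ (indepNum G - i)

/-- The degree of a vertex in a finite simple graph. -/
noncomputable def deg {V : Type*} [Fintype V] (G : SimpleGraph V) (v : V) : ℕ :=
  (@Finset.filter _ (fun u => G.Adj v u) (Classical.decPred _) Finset.univ).card



/-- sets of naturals below `m`, of size `i`, with no two consecutive elements -/
def natIndep (m i : ℕ) : Finset (Finset ℕ) :=
  (Finset.range m).powerset.filter (fun A => A.card = i ∧ ∀ a ∈ A, a + 1 ∉ A)

def pN (m i : ℕ) : ℕ := (natIndep m i).card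

lemma mem_natIndep {m i : ℕ} {A : Finset ℕ} :
    A ∈ natIndep m i ↔ A ⊆ Finset.range m ∧ A.card = i ∧ ∀ a ∈ A, a + 1 ∉ A := by
  simp [natIndep, and_assoc]

lemma pN_zero (m : ℕ) : pN m 0 = 1 := by
  have : natIndep m 0 = {∅} := by
    ext A
    simp only [mem_natIndep, Finset.mem_singleton, Finset.card_eq_zero]
    constructor
    · rintro ⟨-, h, -⟩; exact h
    · rintro rfl; simp
  simp [pN, this]

lemma pN_one_one : pN 1 1 = 1 := by decide

lemma natIndep_card_le {n : ℕ} {A : Finset ℕ} (hA : A ⊆ Finset.range n)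
    (hI : ∀ a ∈ A, a + 1 ∉ A) : A.card ≤ (n + 1) / 2 := by
  have := Finset.card_le_card_of_injOn (f := fun a => a / 2) (t := Finset.range ((n + 1) / 2))
    (fun a ha => by
      have := Finset.mem_range.mp (hA ha)
      simp only [Finset.mem_coe, Finset.mem_range]
      omega)
    (fun a ha b hb hab => by
      simp only at hab
      by_contra hne
      have h1 : a + 1 = b ∨ b + 1 = a := by omega
      rcases h1 with h1 | h1
      · exact hI a ha (h1 ▸ hb)
      · exact hI b hb (h1 ▸ ha))
  simpa using this

lemma pN_eq_zero {n i : ℕ} (h : (n + 1) / 2 < i) : pN n i = 0 := by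
  rw [pN, Finset.card_eq_zero]
  ext A
  simp only [mem_natIndep, Finset.notMem_empty, iff_false]
  rintro ⟨h1, h2, h3⟩
  have := natIndep_card_le h1 h3
  omega

lemma pN_rec (m i : ℕ) : pN (m + 2) (i + 1) = pN (m + 1) (i + 1) + pN m i := by
  classical
  have hsplit := Finset.card_filter_add_card_filter_not
    (s := natIndep (m + 2) (i + 1)) (p := fun A => m + 1 ∈ A)
  have h1 : ((natIndep (m + 2) (i + 1)).filter (fun A => ¬ m + 1 ∈ A)) =
      natIndep (m + 1) (i + 1) := by
    ext A
    simp only [Finset.mem_filter, mem_natIndep]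
    constructor
    · rintro ⟨⟨hsub, hc, hi⟩, hnm⟩
      refine ⟨fun a ha => ?_, hc, hi⟩
      have := Finset.mem_range.mp (hsub ha)
      have : a ≠ m + 1 := fun h => hnm (h ▸ ha)
      simp only [Finset.mem_range]; omega
    · rintro ⟨hsub, hc, hi⟩
      have hnm : m + 1 ∉ A := fun h => by
        have := Finset.mem_range.mp (hsub h); omega
      refine ⟨⟨fun a ha => ?_, hc, hi⟩, hnm⟩
      have := Finset.mem_range.mp (hsub ha)
      simp only [Finset.mem_range]; omega
  have h2 : ((natIndep (m + 2) (i + 1)).filter (fun A => m + 1 ∈ A)).card = pN m i := by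
    apply Finset.card_nbij' (i := fun A => A.erase (m + 1)) (j := fun B => insert (m + 1) B)
    · intro A hA
      simp only [Finset.mem_coe, Finset.mem_filter, mem_natIndep] at hA
      obtain ⟨⟨hsub, hc, hi⟩, hm⟩ := hA
      refine mem_natIndep.mpr ⟨fun a ha => ?_, ?_, ?_⟩
      · obtain ⟨hne, haA⟩ := Finset.mem_erase.mp ha
        have h3 := Finset.mem_range.mp (hsub haA)
        have h4 : a ≠ m := by
          rintro rfl
          exact hi a haA hm
        simp only [Finset.mem_range]; omega
      · rw [Finset.card_erase_of_mem hm, hc]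
        omega
      · intro a ha
        obtain ⟨hne, haA⟩ := Finset.mem_erase.mp ha
        intro hcon
        exact hi a haA (Finset.mem_of_mem_erase hcon)
    · intro B hB
      obtain ⟨hsub, hc, hi⟩ := mem_natIndep.mp hB
      have hmB : m + 1 ∉ B := fun h => by have := Finset.mem_range.mp (hsub h); omega
      simp only [Finset.mem_coe, Finset.mem_filter, mem_natIndep]
      refine ⟨⟨fun a ha => ?_, ?_, ?_⟩, by simp⟩
      · rcases Finset.mem_insert.mp ha with rfl | haB
        · simp only [Finset.mem_range]; omega
        · have := Finset.mem_range.mp (hsub haB)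
          simp only [Finset.mem_range]; omega
      · rw [Finset.card_insert_of_notMem hmB, hc]
      · intro a ha hcon
        rcases Finset.mem_insert.mp ha with rfl | haB
        · rcases Finset.mem_insert.mp hcon with h | h
          · omega
          · have := Finset.mem_range.mp (hsub h); omega
        · have haR := Finset.mem_range.mp (hsub haB)
          rcases Finset.mem_insert.mp hcon with h | h
          · omega
          · exact hi a haB h
    · intro A hA
      simp only [Finset.mem_coe, Finset.mem_filter] at hA
      exact Finset.insert_erase hA.2
    · intro B hB
      obtain ⟨hsub, -, -⟩ := mem_natIndep.mp hB
      have hmB : m + 1 ∉ B := fun h => by have := Finset.mem_range.mp (hsub h); omega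
      exact Finset.erase_insert hmB
  have : pN (m + 2) (i + 1) = (natIndep (m + 2) (i + 1)).card := rfl
  rw [this, ← hsplit, h1, h2]
  ring_nf
  rfl
lemma mem_indepFinsets {V : Type*} [Fintype V] {G : SimpleGraph V} {s : Finset V} :
    s ∈ indepFinsets G ↔ IsIndepSet G s := by
  classical
  simp [indepFinsets]

lemma indep_image_val {m : ℕ} {s : Finset (Fin m)}
    (h : IsIndepSet (SimpleGraph.pathGraph m) s) :
    ∀ a ∈ s.image Fin.val, a + 1 ∉ s.image Fin.val := by
  intro a ha hb
  simp only [Finset.mem_image] at ha hb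
  obtain ⟨u, hu, rfl⟩ := ha
  obtain ⟨v, hv, hv'⟩ := hb
  exact h u hu v hv (SimpleGraph.pathGraph_adj.mpr (Or.inl hv'.symm))

lemma image_val_subset_range {m : ℕ} (s : Finset (Fin m)) :
    s.image Fin.val ⊆ Finset.range m := by
  intro a ha
  simp only [Finset.mem_image] at ha
  obtain ⟨u, -, rfl⟩ := ha
  exact Finset.mem_range.mpr u.isLt

lemma image_val_filter {m : ℕ} {A : Finset ℕ} (hA : A ⊆ Finset.range m) :
    (Finset.univ.filter (fun v : Fin m => (v : ℕ) ∈ A)).image Fin.val = A := by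
  ext a
  simp only [Finset.mem_image, Finset.mem_filter, Finset.mem_univ, true_and]
  constructor
  · rintro ⟨v, hv, rfl⟩; exact hv
  · intro ha
    exact ⟨⟨a, Finset.mem_range.mp (hA ha)⟩, ha, rfl⟩

lemma sCount_pathGraph_eq (m i : ℕ) : sCount (SimpleGraph.pathGraph m) i = pN m i := by
  classical
  rw [sCount, pN]
  apply Finset.card_nbij' (i := fun s => s.image Fin.val)
      (j := fun A => Finset.univ.filter (fun v : Fin m => (v : ℕ) ∈ A))
  · intro s hs
    rw [Finset.mem_coe, Finset.mem_filter] at hs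
    obtain ⟨hs1, hs2⟩ := hs
    have hind := mem_indepFinsets.mp hs1
    refine mem_natIndep.mpr ⟨image_val_subset_range s, ?_, indep_image_val hind⟩
    rw [Finset.card_image_of_injective _ Fin.val_injective, hs2]
  · intro A hA
    obtain ⟨hsub, hc, hi⟩ := mem_natIndep.mp hA
    rw [Finset.mem_coe, Finset.mem_filter]
    constructor
    · refine mem_indepFinsets.mpr ?_
      intro u hu v hv hadj
      rw [Finset.mem_filter] at hu hv
      rcases SimpleGraph.pathGraph_adj.mp hadj with h1 | h1
      · exact hi u.val hu.2 (h1 ▸ hv.2)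
      · exact hi v.val hv.2 (h1 ▸ hu.2)
    · have := image_val_filter hsub
      calc (Finset.univ.filter (fun v : Fin m => (v : ℕ) ∈ A)).card
          = ((Finset.univ.filter (fun v : Fin m => (v : ℕ) ∈ A)).image Fin.val).card := by
            rw [Finset.card_image_of_injective _ Fin.val_injective]
        _ = A.card := by rw [this]
        _ = i := hc
  · intro s hs
    ext v
    simp only [Finset.mem_filter, Finset.mem_univ, true_and, Finset.mem_image]
    constructor
    · rintro ⟨u, hu, hv⟩
      rwa [Fin.val_injective hv] at hu
    · intro hv; exact ⟨v, hv, rfl⟩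
  · intro A hA
    exact image_val_filter (mem_natIndep.mp hA).1

lemma indepNum_pathGraph (n : ℕ) : indepNum (SimpleGraph.pathGraph n) = (n + 1) / 2 := by
  classical
  apply le_antisymm
  · apply Finset.sup_le
    intro s hs
    have hind := mem_indepFinsets.mp hs
    calc s.card = (s.image Fin.val).card :=
          (Finset.card_image_of_injective _ Fin.val_injective).symm
      _ ≤ (n + 1) / 2 := natIndep_card_le (image_val_subset_range s) (indep_image_val hind)
  · have hb : ∀ a ∈ (Finset.range ((n + 1) / 2)).image (fun k => 2 * k), a < n := by
      intro a ha
      simp only [Finset.mem_image, Finset.mem_range] at ha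
      obtain ⟨k, hk, rfl⟩ := ha
      omega
    have hmem : ((Finset.range ((n + 1) / 2)).image (fun k => 2 * k)).attachFin hb ∈
        indepFinsets (SimpleGraph.pathGraph n) := by
      refine mem_indepFinsets.mpr ?_
      intro u hu v hv hadj
      rw [Finset.mem_attachFin] at hu hv
      simp only [Finset.mem_image, Finset.mem_range] at hu hv
      obtain ⟨k, -, hk⟩ := hu
      obtain ⟨l, -, hl⟩ := hv
      rcases SimpleGraph.pathGraph_adj.mp hadj with h1 | h1 <;> omega
    have hcard : (((Finset.range ((n + 1) / 2)).image (fun k => 2 * k)).attachFin hb).card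
        = (n + 1) / 2 := by
      rw [Finset.card_attachFin, Finset.card_image_of_injective, Finset.card_range]
      intro a b hab
      simpa using hab
    calc (n + 1) / 2 = _ := hcard.symm
      _ ≤ _ := Finset.le_sup hmem

def eB (n : ℕ) : ℤ := ∑ i ∈ Finset.range (n + 1), (-1) ^ i * (pN n i : ℤ)

def dB (n : ℕ) : ℤ := ∑ i ∈ Finset.range (n + 1), (-1) ^ i * (i : ℤ) * (pN n i : ℤ)

lemma sum_ext_zero (f : ℕ → ℤ) (a b : ℕ) (hab : a ≤ b)
    (h : ∀ x, a ≤ x → x < b → f x = 0) :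
    ∑ i ∈ Finset.range a, f i = ∑ i ∈ Finset.range b, f i :=
  Finset.sum_subset (Finset.range_subset_range.mpr hab)
    (fun x hx hnx => h x (by simpa using hnx) (by simpa using hx))

lemma eB_rec (n : ℕ) : eB (n + 2) = eB (n + 1) - eB n := by
  have h2 : pN (n + 1) (n + 2) = 0 := pN_eq_zero (by omega)
  have h3 : pN n (n + 1) = 0 := pN_eq_zero (by omega)
  have key : ∀ i ∈ Finset.range (n + 2), (-1 : ℤ) ^ (i + 1) * (pN (n + 2) (i + 1) : ℤ) =
      (-1 : ℤ) ^ (i + 1) * (pN (n + 1) (i + 1) : ℤ) + (-((-1 : ℤ) ^ i * (pN n i : ℤ))) :=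
    fun i _ => by rw [pN_rec]; push_cast; ring
  have hA : eB (n + 1) =
      (∑ i ∈ Finset.range (n + 2), (-1 : ℤ) ^ (i + 1) * (pN (n + 1) (i + 1) : ℤ)) + 1 := by
    rw [eB, Finset.sum_range_succ',
      sum_ext_zero (fun i => (-1 : ℤ) ^ (i + 1) * (pN (n + 1) (i + 1) : ℤ)) (n + 1) (n + 2)
        (by omega) (fun x hx1 hx2 => by
          have hx : x = n + 1 := by omega
          simp [hx, h2])]
    simp [pN_zero]
  have hB : eB n = ∑ i ∈ Finset.range (n + 2), (-1 : ℤ) ^ i * (pN n i : ℤ) := by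
    rw [eB]
    exact sum_ext_zero _ _ _ (by omega) (fun x hx1 hx2 => by
      have hx : x = n + 1 := by omega
      simp [hx, h3])
  rw [eB, Finset.sum_range_succ', Finset.sum_congr rfl key, Finset.sum_add_distrib,
    Finset.sum_neg_distrib, hA, hB]
  simp [pN_zero]
  ring

lemma dB_rec (n : ℕ) : dB (n + 2) = dB (n + 1) - dB n - eB n := by
  have h2 : pN (n + 1) (n + 2) = 0 := pN_eq_zero (by omega)
  have h3 : pN n (n + 1) = 0 := pN_eq_zero (by omega)
  have key : ∀ i ∈ Finset.range (n + 2),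
      (-1 : ℤ) ^ (i + 1) * ((i + 1 : ℕ) : ℤ) * (pN (n + 2) (i + 1) : ℤ) =
      (-1 : ℤ) ^ (i + 1) * ((i + 1 : ℕ) : ℤ) * (pN (n + 1) (i + 1) : ℤ) +
        ((-((-1 : ℤ) ^ i * (i : ℤ) * (pN n i : ℤ))) + (-((-1 : ℤ) ^ i * (pN n i : ℤ)))) :=
    fun i _ => by rw [pN_rec]; push_cast; ring
  have hA : dB (n + 1) =
      ∑ i ∈ Finset.range (n + 2), (-1 : ℤ) ^ (i + 1) * ((i + 1 : ℕ) : ℤ) * (pN (n + 1) (i + 1) : ℤ) := by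
    rw [dB, Finset.sum_range_succ',
      sum_ext_zero (fun i => (-1 : ℤ) ^ (i + 1) * ((i + 1 : ℕ) : ℤ) * (pN (n + 1) (i + 1) : ℤ))
        (n + 1) (n + 2) (by omega) (fun x hx1 hx2 => by
          have hx : x = n + 1 := by omega
          simp [hx, h2])]
    simp
  have hB : dB n = ∑ i ∈ Finset.range (n + 2), (-1 : ℤ) ^ i * (i : ℤ) * (pN n i : ℤ) := by
    rw [dB]
    exact sum_ext_zero _ _ _ (by omega) (fun x hx1 hx2 => by
      have hx : x = n + 1 := by omega
      simp [hx, h3])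
  have hC : eB n = ∑ i ∈ Finset.range (n + 2), (-1 : ℤ) ^ i * (pN n i : ℤ) := by
    rw [eB]
    exact sum_ext_zero _ _ _ (by omega) (fun x hx1 hx2 => by
      have hx : x = n + 1 := by omega
      simp [hx, h3])
  rw [dB, Finset.sum_range_succ', Finset.sum_congr rfl key, Finset.sum_add_distrib,
    Finset.sum_add_distrib, Finset.sum_neg_distrib, Finset.sum_neg_distrib, hA, hB, hC]
  simp
  ring
def Eseq (n : ℕ) : ℤ :=
  match n % 6 with
  | 0 => 1 | 1 => 0 | 2 => -1 | 3 => -1 | 4 => 0 | _ => 1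

def Dseq (n : ℕ) : ℤ :=
  match n % 6 with
  | 0 => 2 * (n / 6 : ℕ)
  | 1 => -(2 * (n / 6 : ℕ) + 1)
  | 2 => -(4 * (n / 6 : ℕ) + 2)
  | 3 => -(2 * (n / 6 : ℕ) + 1)
  | 4 => 2 * (n / 6 : ℕ) + 2
  | _ => 4 * (n / 6 : ℕ) + 4

lemma ED_rec (k : ℕ) :
    Eseq (k + 2) = Eseq (k + 1) - Eseq k ∧
      Dseq (k + 2) = Dseq (k + 1) - Dseq k - Eseq k := by
  have h6 : k % 6 = 0 ∨ k % 6 = 1 ∨ k % 6 = 2 ∨ k % 6 = 3 ∨ k % 6 = 4 ∨ k % 6 = 5 := by omega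
  rcases h6 with h | h | h | h | h | h <;>
  · have e1 : (k + 1) % 6 = (k % 6 + 1) % 6 := by omega
    have e2 : (k + 2) % 6 = (k % 6 + 2) % 6 := by omega
    have d1 : (k + 1) / 6 = if k % 6 = 5 then k / 6 + 1 else k / 6 := by
      split <;> omega
    have d2 : (k + 2) / 6 = if k % 6 ≥ 4 then k / 6 + 1 else k / 6 := by
      split <;> omega
    simp only [Eseq, Dseq, e1, e2, d1, d2, h]
    norm_num
    try ring
    try omega

lemma eB_dB_closed : ∀ n : ℕ, eB n = Eseq n ∧ dB n = Dseq n := by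
  have base0 : eB 0 = 1 ∧ dB 0 = 0 := by
    constructor <;> simp [eB, dB, pN_zero]
  have base1 : eB 1 = 0 ∧ dB 1 = -1 := by
    constructor <;>
    · simp only [eB, dB]
      rw [Finset.sum_range_succ, Finset.sum_range_succ, Finset.sum_range_zero]
      simp [pN_zero, pN_one_one]
  intro n
  induction n using Nat.strong_induction_on with
  | _ n ih =>
    match n with
    | 0 => exact ⟨base0.1, base0.2⟩
    | 1 =>
      refine ⟨?_, ?_⟩
      · rw [base1.1]; decide
      · rw [base1.2]; decide
    | (k + 2) =>
      obtain ⟨he0, hd0⟩ := ih k (by omega)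
      obtain ⟨he1, hd1⟩ := ih (k + 1) (by omega)
      obtain ⟨hE, hD⟩ := ED_rec k
      constructor
      · rw [eB_rec, he0, he1, hE]
      · rw [dB_rec, he0, hd0, hd1, hD]
lemma neg_one_pow_congr' {a b : ℕ} (h : a % 2 = b % 2) : (-1 : ℤ) ^ a = (-1) ^ b := by
  rw [← Nat.div_add_mod a 2, ← Nat.div_add_mod b 2, pow_add, pow_add, pow_mul, pow_mul]
  norm_num [h]

lemma one_sub_X_pow_coeff (k m : ℕ) :
    ((1 - Polynomial.X : Polynomial ℤ) ^ k).coeff m = (-1) ^ m * (k.choose m : ℤ) := by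
  have h : (1 - Polynomial.X : Polynomial ℤ) =
      Polynomial.C (-1) * (Polynomial.X + Polynomial.C (-1)) := by
    rw [Polynomial.C_neg, Polynomial.C_1]
    ring
  rw [h, mul_pow, ← Polynomial.C_pow, Polynomial.coeff_C_mul, Polynomial.coeff_X_add_C_pow]
  rcases le_or_gt m k with hmk | hmk
  · rw [← mul_assoc, ← pow_add]
    have he : k + (k - m) = m + 2 * (k - m) := by omega
    rw [he, pow_add, pow_mul]
    norm_num
  · rw [Nat.choose_eq_zero_of_lt hmk]
    push_cast
    ring

lemma term_coeff (a : ℤ) (i k j : ℕ) :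
    (Polynomial.C a * Polynomial.X ^ i * (1 - Polynomial.X) ^ k).coeff j =
      if i ≤ j then a * ((-1) ^ (j - i) * (k.choose (j - i) : ℤ)) else 0 := by
  have h : Polynomial.C a * Polynomial.X ^ i * (1 - Polynomial.X) ^ k
      = (Polynomial.C a * (1 - Polynomial.X) ^ k) * Polynomial.X ^ i := by ring
  rw [h, Polynomial.coeff_mul_X_pow']
  split
  · rw [Polynomial.coeff_C_mul, one_sub_X_pow_coeff]
  · rfl

lemma hPoly_coeff {V : Type*} [Fintype V] (G : SimpleGraph V) (j : ℕ) :
    (hPoly G).coeff j = ∑ i ∈ Finset.range (indepNum G + 1),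
      if i ≤ j then (sCount G i : ℤ) * ((-1) ^ (j - i) * ((indepNum G - i).choose (j - i) : ℤ))
      else 0 := by
  rw [hPoly, Polynomial.finset_sum_coeff]
  exact Finset.sum_congr rfl (fun i _ => term_coeff _ _ _ _)

lemma hPoly_natDegree_le {V : Type*} [Fintype V] (G : SimpleGraph V) :
    (hPoly G).natDegree ≤ indepNum G := by
  rw [hPoly]
  apply Polynomial.natDegree_sum_le_of_forall_le
  intro i hi
  have hi' : i ≤ indepNum G := by
    have := Finset.mem_range.mp hi; omega
  have h1 : (Polynomial.C ((sCount G i : ℤ)) * Polynomial.X ^ i).natDegree ≤ i := by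
    apply le_trans (Polynomial.natDegree_C_mul_le _ _)
    simp
  have h2 : ((1 - Polynomial.X : Polynomial ℤ) ^ (indepNum G - i)).natDegree
      ≤ indepNum G - i := by
    apply le_trans (Polynomial.natDegree_pow_le)
    have h3 : (1 - Polynomial.X : Polynomial ℤ).natDegree ≤ 1 := by
      apply le_trans (Polynomial.natDegree_sub_le _ _)
      simp
    calc (indepNum G - i) * (1 - Polynomial.X : Polynomial ℤ).natDegree
        ≤ (indepNum G - i) * 1 := Nat.mul_le_mul_left _ h3
      _ = indepNum G - i := by omega
  calc (Polynomial.C ((sCount G i : ℤ)) * Polynomial.X ^ i *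
        (1 - Polynomial.X) ^ (indepNum G - i)).natDegree
      ≤ (Polynomial.C ((sCount G i : ℤ)) * Polynomial.X ^ i).natDegree +
        ((1 - Polynomial.X : Polynomial ℤ) ^ (indepNum G - i)).natDegree :=
      Polynomial.natDegree_mul_le
    _ ≤ i + (indepNum G - i) := Nat.add_le_add h1 h2
    _ ≤ indepNum G := by omega

lemma hPoly_coeff_top_path (n : ℕ) :
    (hPoly (SimpleGraph.pathGraph n)).coeff ((n + 1) / 2) =
      (-1) ^ ((n + 1) / 2) * eB n := by
  have hα : indepNum (SimpleGraph.pathGraph n) = (n + 1) / 2 := indepNum_pathGraph n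
  rw [hPoly_coeff, hα, eB, Finset.mul_sum]
  rw [sum_ext_zero _ ((n + 1) / 2 + 1) (n + 1) (by omega)
    (fun x hx1 hx2 => by
      rw [if_neg (by omega)])]
  refine Finset.sum_congr rfl (fun i hi => ?_)
  rcases le_or_gt i ((n + 1) / 2) with h | h
  · rw [if_pos h, sCount_pathGraph_eq, Nat.choose_self]
    have hs : (-1 : ℤ) ^ ((n + 1) / 2) = (-1) ^ ((n + 1) / 2 - i) * (-1) ^ i := by
      rw [← pow_add]
      exact neg_one_pow_congr' (by omega)
    rw [hs]
    push_cast
    have h2 : ((-1 : ℤ) ^ i * (-1) ^ i) = 1 := by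
      rw [← pow_add]
      exact (neg_one_pow_congr' (by omega)).trans (pow_zero _)
    linear_combination (-(pN n i : ℤ) * (-1 : ℤ) ^ ((n + 1) / 2 - i)) * h2
  · rw [if_neg (by omega), pN_eq_zero h]
    simp

lemma hPoly_coeff_sub_path (n : ℕ) (hn : 1 ≤ (n + 1) / 2) :
    (hPoly (SimpleGraph.pathGraph n)).coeff ((n + 1) / 2 - 1) =
      (-1) ^ ((n + 1) / 2 - 1) * ((((n + 1) / 2 : ℕ) : ℤ) * eB n - dB n) := by
  have hα : indepNum (SimpleGraph.pathGraph n) = (n + 1) / 2 := indepNum_pathGraph n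
  have hrhs : (-1 : ℤ) ^ ((n + 1) / 2 - 1) * ((((n + 1) / 2 : ℕ) : ℤ) * eB n - dB n) =
      ∑ i ∈ Finset.range (n + 1),
        (-1 : ℤ) ^ ((n + 1) / 2 - 1) * ((-1) ^ i * ((((n + 1) / 2 : ℕ) : ℤ) - i) * (pN n i : ℤ)) := by
    rw [eB, dB, Finset.mul_sum, ← Finset.sum_sub_distrib, Finset.mul_sum]
    exact Finset.sum_congr rfl (fun i _ => by ring)
  rw [hPoly_coeff, hα, hrhs]
  rw [sum_ext_zero _ ((n + 1) / 2 + 1) (n + 1) (by omega)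
    (fun x hx1 hx2 => by
      rw [if_neg (by omega)])]
  refine Finset.sum_congr rfl (fun i hi => ?_)
  rcases le_or_gt i ((n + 1) / 2) with h | h
  · rcases le_or_gt i ((n + 1) / 2 - 1) with h1 | h1
    · rw [if_pos h1, sCount_pathGraph_eq]
      have hK : 1 ≤ (n + 1) / 2 - i := by omega
      have hch : ((n + 1) / 2 - i).choose ((n + 1) / 2 - 1 - i) = (n + 1) / 2 - i := by
        have he : (n + 1) / 2 - 1 - i = ((n + 1) / 2 - i) - 1 := by omega
        rw [he, Nat.choose_symm hK, Nat.choose_one_right]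
      rw [hch]
      have hs : (-1 : ℤ) ^ ((n + 1) / 2 - 1 - i) = (-1) ^ ((n + 1) / 2 - 1) * (-1) ^ i := by
        rw [← pow_add]
        exact neg_one_pow_congr' (by omega)
      have hcast : (((n + 1) / 2 - i : ℕ) : ℤ) = (((n + 1) / 2 : ℕ) : ℤ) - i := by
        omega
      rw [hs, hcast]
      ring
    · have hi2 : i = (n + 1) / 2 := by omega
      rw [if_neg (by omega), hi2]
      simp
  · rw [if_neg (by omega), pN_eq_zero h]
    simp

lemma Eseq_ne_zero {n : ℕ} (h : n % 3 = 0 ∨ n % 3 = 2) : Eseq n ≠ 0 := by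
  have h6 : n % 6 = 0 ∨ n % 6 = 2 ∨ n % 6 = 3 ∨ n % 6 = 5 := by omega
  rcases h6 with h | h | h | h <;> simp [Eseq, h]

lemma Eseq_eq_zero {n : ℕ} (h : n % 3 = 1) : Eseq n = 0 := by
  have h6 : n % 6 = 1 ∨ n % 6 = 4 := by omega
  rcases h6 with h | h <;> simp [Eseq, h]

lemma Dseq_ne_zero {n : ℕ} (h : n % 3 = 1) : Dseq n ≠ 0 := by
  have h6 : n % 6 = 1 ∨ n % 6 = 4 := by omega
  rcases h6 with h | h <;>
  · simp only [Dseq, h]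
    omega


/-- For the path `P_n` on `n ≥ 1` vertices, `deg h_{P_n} = α(P_n)` iff
`n ≡ 0, 2 (mod 3)`, and `deg h_{P_n} = α(P_n) - 1` iff `n ≡ 1 (mod 3)`.
Here `α(P_n) = ⌈n/2⌉`. -/
theorem degree_hPoly_pathGraph (n : ℕ) (hn : 1 ≤ n) :
    ((hPoly (SimpleGraph.pathGraph n)).natDegree = indepNum (SimpleGraph.pathGraph n) ↔
      n % 3 = 0 ∨ n % 3 = 2) ∧
    ((hPoly (SimpleGraph.pathGraph n)).natDegree = indepNum (SimpleGraph.pathGraph n) - 1 ↔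
      n % 3 = 1) ∧
    indepNum (SimpleGraph.pathGraph n) = (n + 1) / 2 := by
  have hα : indepNum (SimpleGraph.pathGraph n) = (n + 1) / 2 := indepNum_pathGraph n
  have hα1 : 1 ≤ (n + 1) / 2 := by omega
  have hle := hPoly_natDegree_le (SimpleGraph.pathGraph n)
  rw [hα] at hle
  obtain ⟨heB, hdB⟩ := eB_dB_closed n
  by_cases hcase : n % 3 = 1
  · have hE : eB n = 0 := heB.trans (Eseq_eq_zero hcase)
    have hD : dB n ≠ 0 := by rw [hdB]; exact Dseq_ne_zero hcase
    have hct : (hPoly (SimpleGraph.pathGraph n)).coeff ((n + 1) / 2) = 0 := by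
      rw [hPoly_coeff_top_path, hE, mul_zero]
    have hcs : (hPoly (SimpleGraph.pathGraph n)).coeff ((n + 1) / 2 - 1) ≠ 0 := by
      rw [hPoly_coeff_sub_path n hα1, hE]
      intro hcon
      rcases mul_eq_zero.mp hcon with h | h
      · exact absurd h (pow_ne_zero _ (by norm_num))
      · apply hD
        have : (((n + 1) / 2 : ℕ) : ℤ) * 0 - dB n = 0 := h
        linarith
    have hne : hPoly (SimpleGraph.pathGraph n) ≠ 0 := fun hzero => hcs (by rw [hzero]; simp)
    have hge : (n + 1) / 2 - 1 ≤ (hPoly (SimpleGraph.pathGraph n)).natDegree :=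
      Polynomial.le_natDegree_of_ne_zero hcs
    have hneq : (hPoly (SimpleGraph.pathGraph n)).natDegree ≠ (n + 1) / 2 := by
      intro hdeg
      have hl : (hPoly (SimpleGraph.pathGraph n)).coeff
          ((hPoly (SimpleGraph.pathGraph n)).natDegree) ≠ 0 := by
        rw [← Polynomial.leadingCoeff]
        exact Polynomial.leadingCoeff_ne_zero.mpr hne
      exact hl (hdeg ▸ hct)
    have hdeg : (hPoly (SimpleGraph.pathGraph n)).natDegree = (n + 1) / 2 - 1 := by omega
    refine ⟨?_, ?_, hα⟩
    · rw [hα, hdeg]; omega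
    · rw [hα, hdeg]; omega
  · have h02 : n % 3 = 0 ∨ n % 3 = 2 := by omega
    have hE : eB n ≠ 0 := by rw [heB]; exact Eseq_ne_zero h02
    have hct : (hPoly (SimpleGraph.pathGraph n)).coeff ((n + 1) / 2) ≠ 0 := by
      rw [hPoly_coeff_top_path]
      exact mul_ne_zero (pow_ne_zero _ (by norm_num)) hE
    have hdeg : (hPoly (SimpleGraph.pathGraph n)).natDegree = (n + 1) / 2 :=
      le_antisymm hle (Polynomial.le_natDegree_of_ne_zero hct)
    refine ⟨?_, ?_, hα⟩
    · rw [hα, hdeg]; omega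
    · rw [hα, hdeg]; omega
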